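/- For every even integer E ≥ 2, the truncated Wallis product π_E = (2·E(E-2)²(E-4)²···4²·2²)/((E-1)²(E-3)²···3²·1²) satisfies π < π_E. -/

import Mathlib

/-- The truncated Wallis product `π_E = (2·E(E-2)²···4²·2²)/((E-1)²(E-3)²···3²·1²)`,
as a function of an even `E`. -/
noncomputable def wallisTrunc (E : ℕ) : ℝ :=
  2 * (∏ k ∈ Finset.Icc 1 (E / 2 - 1), (2 * (k : ℝ)) ^ 2 / ((2 * k - 1) * (2 * k + 1)))
    * ((E : ℝ) / (E - 1))

/-! With `W k = ∏_{i<k} (2i+2)²/((2i+1)(2i+3))` the Mathlib Wallis partial product,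
`π_{2k+2} = 2 W k (2k+2)/(2k+1) = 2 W (k+1) (2k+3)/(2k+2)`. Mathlib's lower bound
`W (k+1) ≥ (2k+3)/(2k+4) · π/2` then gives `π_{2k+2} ≥ π (2k+3)²/((2k+2)(2k+4)) > π`. -/

open Real Real.Wallis

lemma prod_Icc_eq_W (k : ℕ) :
    ∏ j ∈ Finset.Icc 1 k, (2 * (j : ℝ)) ^ 2 / ((2 * j - 1) * (2 * j + 1)) = W k := by
  induction k with
  | zero => simp [W]
  | succ k ih =>
    rw [Finset.prod_Icc_succ_top (by omega), ih, W_succ, div_mul_div_comm]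
    push_cast
    congr 1
    ring

lemma wallisTrunc_two_mul_add_two (k : ℕ) :
    wallisTrunc (2 * k + 2) = 2 * W k * ((2 * k + 2) / (2 * k + 1)) := by
  have hhalf : (2 * k + 2) / 2 - 1 = k := by omega
  rw [wallisTrunc, hhalf, prod_Icc_eq_W]
  push_cast
  ring

lemma pi_div_two_lt_W_mul (k : ℕ) : π / 2 < W k * ((2 * k + 2) / (2 * k + 1)) := by
  have hk : (0 : ℝ) ≤ k := k.cast_nonneg
  have hshift : W k * ((2 * k + 2) / (2 * k + 1)) = W (k + 1) * ((2 * k + 3) / (2 * k + 2)) := by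
    rw [W_succ]
    field_simp
  have hlow : (2 * k + 3) / (2 * k + 4) * (π / 2) ≤ W (k + 1) := by
    convert le_W (k + 1) using 3 <;> push_cast <;> ring
  calc π / 2 < (2 * k + 3) / (2 * k + 4) * (π / 2) * ((2 * k + 3) / (2 * k + 2)) := by
        have hpi := pi_pos
        rw [← sub_pos]
        field_simp
        nlinarith
    _ ≤ W (k + 1) * ((2 * k + 3) / (2 * k + 2)) := by
        gcongr
    _ = W k * ((2 * k + 2) / (2 * k + 1)) := hshift.symm

theorem wallis_trunc_gt_pi (E : ℕ) (hE : Even E) (hE2 : 2 ≤ E) :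
    Real.pi < wallisTrunc E := by
  obtain ⟨k, rfl⟩ : ∃ k, E = 2 * k + 2 := by
    obtain ⟨n, rfl⟩ := hE
    exact ⟨n - 1, by omega⟩
  rw [wallisTrunc_two_mul_add_two]
  linarith [pi_div_two_lt_W_mul k]
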